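/- Let π be a target policy and μ a behavior policy in a finite-horizon tabular MDP with rewards in [0,1]. Suppose the marginal occupancies satisfy d^μ_t(s,a) > 0 whenever d^π_t(s,a) > 0, and that τ_s := max_{t,s} d^π_t(s)/d^μ_t(s) < ∞ and τ_a := max_{t,s,a} π_t(a|s)/μ_t(a|s) < ∞ (maxima over indices where the denominators are positive). Then Σ_{t=1}^H Σ_{(s,a): d^μ_t(s,a)>0} d^μ_t(s,a) · (d^π_t(s,a)/d^μ_t(s,a))² · Var[ V^π_{t+1}(s_{t+1}) + r_t | s_t = s, a_t = a ] ≤ τ_s τ_a H². -/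
import Mathlib


open Finset MeasureTheory

section MDPDefs

variable {S A : Type} [Fintype S] [Fintype A]

/-- `π` is a (time-inhomogeneous, Markov) policy: `π t s a = π_t(a|s)`. -/
def IsPolicy (π : ℕ → S → A → ℝ) : Prop :=
  (∀ t s a, 0 ≤ π t s a) ∧ ∀ t s, ∑ a : A, π t s a = 1

/-- `P` is a transition kernel: `P t s a s' = P_t(s'|s,a)`. -/
def IsKernel (P : ℕ → S → A → S → ℝ) : Prop :=
  (∀ t s a s', 0 ≤ P t s a s') ∧ ∀ t s a, ∑ s' : S, P t s a s' = 1

/-- `d` is a probability distribution on states. -/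
def IsDist (d : S → ℝ) : Prop := (∀ s, 0 ≤ d s) ∧ ∑ s : S, d s = 1

/-- Value function `V^π_t` (time `t` is 0-indexed, horizon `H`, `V^π_t = 0` for `t ≥ H`):
`V^π_t(s) = Σ_a π_t(a|s) (r_t(s,a) + Σ_{s'} P_t(s'|s,a) V^π_{t+1}(s'))`. -/
noncomputable def valueV (H : ℕ) (P : ℕ → S → A → S → ℝ) (r : ℕ → S → A → ℝ)
    (π : ℕ → S → A → ℝ) (t : ℕ) : S → ℝ :=
  if _h : t < H then
    fun s => ∑ a : A, π t s a * (r t s a + ∑ s' : S, P t s a s' * valueV H P r π (t + 1) s')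
  else fun _ => 0
termination_by H - t
decreasing_by omega

/-- Q function `Q^π_t(s,a) = r_t(s,a) + Σ_{s'} P_t(s'|s,a) V^π_{t+1}(s')`. -/
noncomputable def qval (H : ℕ) (P : ℕ → S → A → S → ℝ) (r : ℕ → S → A → ℝ)
    (π : ℕ → S → A → ℝ) (t : ℕ) (s : S) (a : A) : ℝ :=
  r t s a + ∑ s' : S, P t s a s' * valueV H P r π (t + 1) s'

/-- The value of a policy: `v^π = Σ_s d₁(s) V^π_1(s)`. -/
noncomputable def vval (H : ℕ) (P : ℕ → S → A → S → ℝ) (r : ℕ → S → A → ℝ)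
    (π : ℕ → S → A → ℝ) (d1 : S → ℝ) : ℝ :=
  ∑ s : S, d1 s * valueV H P r π 0 s

/-- Marginal state occupancy `d^π_t(s)` (time 0-indexed). -/
noncomputable def occS (P : ℕ → S → A → S → ℝ) (π : ℕ → S → A → ℝ) (d1 : S → ℝ) :
    ℕ → S → ℝ
  | 0 => d1
  | t + 1 => fun s' => ∑ s : S, ∑ a : A, occS P π d1 t s * π t s a * P t s a s'

/-- Marginal state-action occupancy `d^π_t(s,a) = d^π_t(s) π_t(a|s)`. -/
noncomputable def occSA (P : ℕ → S → A → S → ℝ) (π : ℕ → S → A → ℝ) (d1 : S → ℝ)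
    (t : ℕ) (s : S) (a : A) : ℝ :=
  occS P π d1 t s * π t s a

end MDPDefs
section RewardDefs

variable {S A : Type} [Fintype S] [Fintype A]

/-- `R` is a family of reward distributions supported on `[0,1]`. -/
def IsRewardDist (R : ℕ → S → A → MeasureTheory.Measure ℝ) : Prop :=
  ∀ t (s : S) (a : A),
    MeasureTheory.IsProbabilityMeasure (R t s a) ∧ R t s a ((Set.Icc (0 : ℝ) 1)ᶜ) = 0

/-- The mean reward `r̄_t(s,a)` of the reward distribution `R_t(·|s,a)`. -/
noncomputable def rbar (R : ℕ → S → A → MeasureTheory.Measure ℝ) (t : ℕ) (s : S) (a : A) : ℝ :=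
  ∫ x, x ∂(R t s a)

/-- The conditional variance `Var[r_t + V^π_{t+1}(s_{t+1}) | s_t = s, a_t = a]`,
where `s_{t+1} ~ P_t(·|s,a)` and `r_t ~ R_t(·|s,a)` are independent. -/
noncomputable def condVar (H : ℕ) (P : ℕ → S → A → S → ℝ)
    (R : ℕ → S → A → MeasureTheory.Measure ℝ)
    (π : ℕ → S → A → ℝ) (t : ℕ) (s : S) (a : A) : ℝ :=
  (∑ s' : S, P t s a s' * ∫ x, (valueV H P (rbar R) π (t + 1) s' + x) ^ 2 ∂(R t s a))
    - qval H P (rbar R) π t s a ^ 2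

end RewardDefs

/-! ### Auxiliary lemmas -/

section Aux

/-- Jensen's inequality (Cauchy–Schwarz form) for finite probability vectors. -/
lemma jensen_sq {ι : Type*} [Fintype ι] (w f : ι → ℝ) (hw : ∀ i, 0 ≤ w i)
    (hsum : ∑ i, w i = 1) : (∑ i, w i * f i) ^ 2 ≤ ∑ i, w i * f i ^ 2 := by
  have := Finset.sum_sq_le_sum_mul_sum_of_sq_eq_mul Finset.univ
    (r := fun i => w i * f i) (f := fun i => w i) (g := fun i => w i * f i ^ 2)
    (fun i _ => hw i) (fun i _ => mul_nonneg (hw i) (sq_nonneg _))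
    (fun i _ => by ring)
  simpa [hsum] using this

/-- Gauss-type sum: `∑_{t<n} (2(n-t)-1) = n²`. -/
lemma gauss_odd (n : ℕ) : ∑ t ∈ Finset.range n, (2 * ((n : ℝ) - t) - 1) = (n : ℝ) ^ 2 := by
  have h1 : ∀ m : ℕ, ∑ t ∈ Finset.range m, (2 * (t : ℝ) + 1) = (m : ℝ) ^ 2 := by
    intro m
    induction m with
    | zero => simp
    | succ m ih => rw [Finset.sum_range_succ, ih]; push_cast; ring
  have h2 := Finset.sum_range_reflect (fun t => 2 * (t : ℝ) + 1) n
  rw [← h1 n, ← h2]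
  refine Finset.sum_congr rfl fun t ht => ?_
  rw [Finset.mem_range] at ht
  have hc : ((n - 1 - t : ℕ) : ℝ) = (n : ℝ) - 1 - t := by
    have he : n - 1 - t = n - (1 + t) := by omega
    rw [he, Nat.cast_sub (by omega : 1 + t ≤ n)]
    push_cast; ring
  rw [hc]; ring

variable (ν : Measure ℝ) [IsProbabilityMeasure ν] (hν : ν ((Set.Icc (0:ℝ) 1)ᶜ) = 0)
include hν

lemma ae_mem_Icc : ∀ᵐ x ∂ν, x ∈ Set.Icc (0:ℝ) 1 := by
  rw [MeasureTheory.ae_iff]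
  exact hν

lemma integrable_id' : Integrable (fun x : ℝ => x) ν := by
  refine Integrable.mono' (integrable_const 1) measurable_id.aestronglyMeasurable ?_
  filter_upwards [ae_mem_Icc ν hν] with x hx
  rw [Real.norm_eq_abs, abs_le]; exact ⟨by linarith [hx.1], hx.2⟩

lemma integrable_sq' : Integrable (fun x : ℝ => x ^ 2) ν := by
  refine Integrable.mono' (integrable_const 1) (measurable_id.pow_const 2).aestronglyMeasurable ?_
  filter_upwards [ae_mem_Icc ν hν] with x hx
  rw [Real.norm_eq_abs, abs_le]
  constructor
  · nlinarith [hx.1, hx.2]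
  · nlinarith [hx.1, hx.2]

lemma integral_affine_sq (c : ℝ) :
    ∫ x, (c + x) ^ 2 ∂ν = c ^ 2 + 2 * c * (∫ x, x ∂ν) + ∫ x, x ^ 2 ∂ν := by
  have hfun : (fun x : ℝ => (c + x) ^ 2) = fun x => c ^ 2 + 2 * c * x + x ^ 2 := by
    funext x; ring
  have hid := integrable_id' ν hν
  have h2 : Integrable (fun x : ℝ => 2 * c * x) ν := hid.const_mul _
  have h1 : Integrable (fun x : ℝ => c ^ 2 + 2 * c * x) ν := (integrable_const _).add h2
  have hsq := integrable_sq' ν hν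
  rw [hfun, integral_add h1 hsq, integral_add (integrable_const _) h2,
    integral_const, integral_const_mul]
  simp

lemma mean_nonneg' : 0 ≤ ∫ x, x ∂ν := by
  refine integral_nonneg_of_ae ?_
  filter_upwards [ae_mem_Icc ν hν] with x hx using hx.1

lemma mean_le_one' : (∫ x, x ∂ν) ≤ 1 := by
  calc (∫ x, x ∂ν) ≤ ∫ _, (1:ℝ) ∂ν := by
        refine integral_mono_ae (integrable_id' ν hν) (integrable_const 1) ?_
        filter_upwards [ae_mem_Icc ν hν] with x hx using hx.2
    _ = 1 := by simp

lemma m2_le_one' : (∫ x, x ^ 2 ∂ν) ≤ 1 := by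
  calc (∫ x, x ^ 2 ∂ν) ≤ ∫ _, (1:ℝ) ∂ν := by
        refine integral_mono_ae (integrable_sq' ν hν) (integrable_const 1) ?_
        filter_upwards [ae_mem_Icc ν hν] with x hx
        nlinarith [hx.1, hx.2]
    _ = 1 := by simp

lemma sq_mean_le_m2 : (∫ x, x ∂ν) ^ 2 ≤ ∫ x, x ^ 2 ∂ν := by
  have h := integral_affine_sq ν hν (-(∫ x, x ∂ν))
  have h0 : 0 ≤ ∫ x, (-(∫ x, x ∂ν) + x) ^ 2 ∂ν := integral_nonneg (fun x => sq_nonneg _)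
  nlinarith [h, h0]

end Aux

section Lemmas
variable {S A : Type} [Fintype S] [Fintype A]
variable {H : ℕ} {P : ℕ → S → A → S → ℝ} {r : ℕ → S → A → ℝ} {π : ℕ → S → A → ℝ} {d1 : S → ℝ}

lemma valueV_of_lt {t : ℕ} (h : t < H) (s : S) :
    valueV H P r π t s = ∑ a : A, π t s a * qval H P r π t s a := by
  rw [valueV]
  simp [h, qval]

lemma valueV_of_ge {t : ℕ} (h : ¬ t < H) (s : S) : valueV H P r π t s = 0 := by
  rw [valueV]; simp [h]

lemma valueV_nonneg (hP : IsKernel P) (hπ : IsPolicy π) (hr : ∀ t s a, 0 ≤ r t s a)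
    (t : ℕ) (s : S) : 0 ≤ valueV H P r π t s := by
  rw [valueV]
  split
  · refine Finset.sum_nonneg fun a _ => mul_nonneg (hπ.1 t s a) ?_
    refine add_nonneg (hr t s a) (Finset.sum_nonneg fun s' _ => mul_nonneg (hP.1 t s a s') ?_)
    exact valueV_nonneg hP hπ hr (t + 1) s'
  · exact le_refl _
termination_by H - t
decreasing_by omega

lemma valueV_le (hP : IsKernel P) (hπ : IsPolicy π) (hr : ∀ t s a, r t s a ≤ 1)
    (hr0 : ∀ t s a, 0 ≤ r t s a)
    (t : ℕ) (s : S) : valueV H P r π t s ≤ ((H - t : ℕ) : ℝ) := by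
  rw [valueV]
  split
  · rename_i h
    calc ∑ a : A, π t s a * (r t s a + ∑ s' : S, P t s a s' * valueV H P r π (t + 1) s')
        ≤ ∑ a : A, π t s a * (1 + ((H - (t+1) : ℕ) : ℝ)) := by
          refine Finset.sum_le_sum fun a _ => mul_le_mul_of_nonneg_left ?_ (hπ.1 t s a)
          refine add_le_add (hr t s a) ?_
          calc ∑ s' : S, P t s a s' * valueV H P r π (t + 1) s'
              ≤ ∑ s' : S, P t s a s' * ((H - (t+1) : ℕ) : ℝ) := by
                refine Finset.sum_le_sum fun s' _ =>
                  mul_le_mul_of_nonneg_left ?_ (hP.1 t s a s')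
                exact valueV_le hP hπ hr hr0 (t + 1) s'
            _ = ((H - (t+1) : ℕ) : ℝ) := by rw [← Finset.sum_mul, hP.2 t s a, one_mul]
      _ = 1 + ((H - (t+1) : ℕ) : ℝ) := by rw [← Finset.sum_mul, hπ.2 t s, one_mul]
      _ = ((H - t : ℕ) : ℝ) := by
          have : (H - (t+1)) + 1 = H - t := by omega
          push_cast [← this]
          ring
  · simp
termination_by H - t
decreasing_by omega

lemma occS_nonneg (hP : IsKernel P) (hπ : IsPolicy π) (hd1 : IsDist d1)
    (t : ℕ) (s : S) : 0 ≤ occS P π d1 t s := by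
  induction t generalizing s with
  | zero => exact hd1.1 s
  | succ t ih =>
    refine Finset.sum_nonneg fun s0 _ => Finset.sum_nonneg fun a _ => ?_
    exact mul_nonneg (mul_nonneg (ih s0) (hπ.1 t s0 a)) (hP.1 t s0 a s)

lemma occS_sum (hP : IsKernel P) (hπ : IsPolicy π) (hd1 : IsDist d1)
    (t : ℕ) : ∑ s : S, occS P π d1 t s = 1 := by
  induction t with
  | zero => exact hd1.2
  | succ t ih =>
    show ∑ s' : S, ∑ s : S, ∑ a : A, occS P π d1 t s * π t s a * P t s a s' = 1
    rw [Finset.sum_comm]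
    have h : ∀ s : S, ∑ s' : S, ∑ a : A, occS P π d1 t s * π t s a * P t s a s'
        = occS P π d1 t s := by
      intro s
      rw [Finset.sum_comm]
      calc ∑ a : A, ∑ s' : S, occS P π d1 t s * π t s a * P t s a s'
          = ∑ a : A, occS P π d1 t s * π t s a := by
            refine Finset.sum_congr rfl fun a _ => ?_
            rw [← Finset.mul_sum, hP.2 t s a, mul_one]
        _ = occS P π d1 t s := by rw [← Finset.mul_sum, hπ.2 t s, mul_one]
    rw [Finset.sum_congr rfl fun s _ => h s, ih]

lemma occSA_sum (hP : IsKernel P) (hπ : IsPolicy π) (hd1 : IsDist d1)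
    (t : ℕ) : ∑ s : S, ∑ a : A, occSA P π d1 t s a = 1 := by
  calc ∑ s : S, ∑ a : A, occS P π d1 t s * π t s a
      = ∑ s : S, occS P π d1 t s := by
        refine Finset.sum_congr rfl fun s _ => ?_
        rw [← Finset.mul_sum, hπ.2 t s, mul_one]
    _ = 1 := occS_sum hP hπ hd1 t

/-- The flow identity: pushing a function of the next state through one step. -/
lemma occ_flow (hP : IsKernel P) (hπ : IsPolicy π) (hd1 : IsDist d1) (t : ℕ) (f : S → ℝ) :
    ∑ s : S, ∑ a : A, occSA P π d1 t s a * (∑ s' : S, P t s a s' * f s')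
      = ∑ s' : S, occS P π d1 (t+1) s' * f s' := by
  have h : ∀ s' : S, occS P π d1 (t+1) s' * f s'
      = ∑ s : S, ∑ a : A, occSA P π d1 t s a * (P t s a s' * f s') := by
    intro s'
    show (∑ s : S, ∑ a : A, occS P π d1 t s * π t s a * P t s a s') * f s' = _
    rw [Finset.sum_mul]
    refine Finset.sum_congr rfl fun s _ => ?_
    rw [Finset.sum_mul]
    refine Finset.sum_congr rfl fun a _ => ?_
    unfold occSA; ring
  calc ∑ s : S, ∑ a : A, occSA P π d1 t s a * (∑ s' : S, P t s a s' * f s')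
      = ∑ s : S, ∑ a : A, ∑ s' : S, occSA P π d1 t s a * (P t s a s' * f s') := by
        exact Finset.sum_congr rfl fun s _ =>
          Finset.sum_congr rfl fun a _ => Finset.mul_sum _ _ _
    _ = ∑ s : S, ∑ s' : S, ∑ a : A, occSA P π d1 t s a * (P t s a s' * f s') :=
        Finset.sum_congr rfl fun s _ => Finset.sum_comm
    _ = ∑ s' : S, ∑ s : S, ∑ a : A, occSA P π d1 t s a * (P t s a s' * f s') :=
        Finset.sum_comm
    _ = ∑ s' : S, occS P π d1 (t+1) s' * f s' :=
        Finset.sum_congr rfl fun s' _ => (h s').symm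

end Lemmas

section CondVarLemmas
variable {S A : Type} [Fintype S] [Fintype A]
variable {H : ℕ} {P : ℕ → S → A → S → ℝ} {R : ℕ → S → A → Measure ℝ}
  {π : ℕ → S → A → ℝ} {d1 : S → ℝ}

lemma rbar_nonneg (hR : IsRewardDist R) (t : ℕ) (s : S) (a : A) : 0 ≤ rbar R t s a := by
  haveI := (hR t s a).1
  exact mean_nonneg' _ (hR t s a).2

lemma rbar_le_one (hR : IsRewardDist R) (t : ℕ) (s : S) (a : A) : rbar R t s a ≤ 1 := by
  haveI := (hR t s a).1
  exact mean_le_one' _ (hR t s a).2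

/-- Expansion of the conditional variance. -/
lemma condVar_eq' (hR : IsRewardDist R) (hP : IsKernel P) (t : ℕ) (s : S) (a : A) :
    condVar H P R π t s a =
      (∑ s' : S, P t s a s' * valueV H P (rbar R) π (t+1) s' ^ 2)
        + 2 * rbar R t s a * (∑ s' : S, P t s a s' * valueV H P (rbar R) π (t+1) s')
        + (∫ x, x ^ 2 ∂(R t s a))
        - qval H P (rbar R) π t s a ^ 2 := by
  haveI := (hR t s a).1
  have hexp : ∀ s' : S, ∫ x, (valueV H P (rbar R) π (t+1) s' + x) ^ 2 ∂(R t s a)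
      = valueV H P (rbar R) π (t+1) s' ^ 2
        + 2 * valueV H P (rbar R) π (t+1) s' * rbar R t s a + ∫ x, x ^ 2 ∂(R t s a) :=
    fun s' => integral_affine_sq _ (hR t s a).2 _
  unfold condVar
  rw [Finset.sum_congr rfl fun s' _ => by rw [hexp s']]
  simp_rw [mul_add, Finset.sum_add_distrib]
  have e2 : ∑ s' : S, P t s a s' * (2 * valueV H P (rbar R) π (t+1) s' * rbar R t s a)
      = 2 * rbar R t s a * ∑ s' : S, P t s a s' * valueV H P (rbar R) π (t+1) s' := by
    rw [Finset.mul_sum]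
    exact Finset.sum_congr rfl fun s' _ => by ring
  have e3 : ∑ s' : S, P t s a s' * (∫ x, x ^ 2 ∂(R t s a)) = ∫ x, x ^ 2 ∂(R t s a) := by
    rw [← Finset.sum_mul, hP.2 t s a, one_mul]
  rw [e2, e3]
  all_goals ring

lemma condVar_nonneg (hR : IsRewardDist R) (hP : IsKernel P) (t : ℕ) (s : S) (a : A) :
    0 ≤ condVar H P R π t s a := by
  haveI := (hR t s a).1
  rw [condVar_eq' hR hP]
  have h1 : (∑ s' : S, P t s a s' * valueV H P (rbar R) π (t+1) s') ^ 2
      ≤ ∑ s' : S, P t s a s' * valueV H P (rbar R) π (t+1) s' ^ 2 :=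
    jensen_sq (P t s a) _ (hP.1 t s a) (hP.2 t s a)
  have h2 : rbar R t s a ^ 2 ≤ ∫ x, x ^ 2 ∂(R t s a) :=
    sq_mean_le_m2 _ (hR t s a).2
  have hq : qval H P (rbar R) π t s a
      = rbar R t s a + ∑ s' : S, P t s a s' * valueV H P (rbar R) π (t+1) s' := rfl
  rw [hq]
  nlinarith [h1, h2]

lemma condVar_le (hR : IsRewardDist R) (hP : IsKernel P) (hπ : IsPolicy π)
    {t : ℕ} (ht : t < H) (s : S) (a : A) :
    condVar H P R π t s a ≤
      (∑ s' : S, P t s a s' * valueV H P (rbar R) π (t+1) s' ^ 2)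
        - qval H P (rbar R) π t s a ^ 2 + (2 * ((H : ℝ) - t) - 1) := by
  haveI := (hR t s a).1
  rw [condVar_eq' hR hP]
  have hm0 : 0 ≤ rbar R t s a := rbar_nonneg hR t s a
  have hm1 : rbar R t s a ≤ 1 := rbar_le_one hR t s a
  have hm2 : (∫ x, x ^ 2 ∂(R t s a)) ≤ 1 := m2_le_one' _ (hR t s a).2
  have hB0 : 0 ≤ ∑ s' : S, P t s a s' * valueV H P (rbar R) π (t+1) s' :=
    Finset.sum_nonneg fun s' _ => mul_nonneg (hP.1 t s a s')
      (valueV_nonneg hP hπ (rbar_nonneg hR) (t+1) s')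
  have hB : (∑ s' : S, P t s a s' * valueV H P (rbar R) π (t+1) s') ≤ (H : ℝ) - t - 1 := by
    calc ∑ s' : S, P t s a s' * valueV H P (rbar R) π (t+1) s'
        ≤ ∑ s' : S, P t s a s' * ((H - (t+1) : ℕ) : ℝ) := by
          refine Finset.sum_le_sum fun s' _ => mul_le_mul_of_nonneg_left ?_ (hP.1 t s a s')
          exact valueV_le hP hπ (rbar_le_one hR) (rbar_nonneg hR) (t+1) s'
      _ = ((H - (t+1) : ℕ) : ℝ) := by rw [← Finset.sum_mul, hP.2 t s a, one_mul]
      _ = (H : ℝ) - t - 1 := by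
          rw [Nat.cast_sub (by omega : t + 1 ≤ H)]
          push_cast; ring
  nlinarith [hB0, hB, hm0, hm1, hm2]

/-- Per-step bound on the weighted conditional variances. -/
lemma step_bound (hP : IsKernel P) (hR : IsRewardDist R) (hπ : IsPolicy π)
    (hd1 : IsDist d1) {t : ℕ} (ht : t < H) :
    ∑ s : S, ∑ a : A, occSA P π d1 t s a * condVar H P R π t s a
      ≤ (2 * ((H : ℝ) - t) - 1)
        + (∑ s' : S, occS P π d1 (t+1) s' * valueV H P (rbar R) π (t+1) s' ^ 2)
        - ∑ s : S, occS P π d1 t s * valueV H P (rbar R) π t s ^ 2 := by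
  have hoccSA : ∀ (s : S) (a : A), 0 ≤ occSA P π d1 t s a :=
    fun s a => mul_nonneg (occS_nonneg hP hπ hd1 t s) (hπ.1 t s a)
  -- Jensen at the state level
  have hW : ∑ s : S, occS P π d1 t s * valueV H P (rbar R) π t s ^ 2
      ≤ ∑ s : S, ∑ a : A, occSA P π d1 t s a * qval H P (rbar R) π t s a ^ 2 := by
    refine Finset.sum_le_sum fun s _ => ?_
    have hval : valueV H P (rbar R) π t s ^ 2
        ≤ ∑ a : A, π t s a * qval H P (rbar R) π t s a ^ 2 := by
      rw [valueV_of_lt ht]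
      exact jensen_sq (π t s) _ (hπ.1 t s) (hπ.2 t s)
    calc occS P π d1 t s * valueV H P (rbar R) π t s ^ 2
        ≤ occS P π d1 t s * ∑ a : A, π t s a * qval H P (rbar R) π t s a ^ 2 :=
          mul_le_mul_of_nonneg_left hval (occS_nonneg hP hπ hd1 t s)
      _ = ∑ a : A, occSA P π d1 t s a * qval H P (rbar R) π t s a ^ 2 := by
          rw [Finset.mul_sum]
          exact Finset.sum_congr rfl fun a _ => by unfold occSA; ring
  have hc : ∑ s : S, ∑ a : A, occSA P π d1 t s a * (2 * ((H : ℝ) - t) - 1)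
      = (2 * ((H : ℝ) - t) - 1) := by
    have h1 : ∀ s : S, ∑ a : A, occSA P π d1 t s a * (2 * ((H : ℝ) - t) - 1)
        = (∑ a : A, occSA P π d1 t s a) * (2 * ((H : ℝ) - t) - 1) :=
      fun s => (Finset.sum_mul _ _ _).symm
    rw [Finset.sum_congr rfl fun s _ => h1 s, ← Finset.sum_mul, occSA_sum hP hπ hd1 t, one_mul]
  calc ∑ s : S, ∑ a : A, occSA P π d1 t s a * condVar H P R π t s a
      ≤ ∑ s : S, ∑ a : A, occSA P π d1 t s a *
          ((∑ s' : S, P t s a s' * valueV H P (rbar R) π (t+1) s' ^ 2)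
            - qval H P (rbar R) π t s a ^ 2 + (2 * ((H : ℝ) - t) - 1)) := by
        refine Finset.sum_le_sum fun s _ => Finset.sum_le_sum fun a _ => ?_
        exact mul_le_mul_of_nonneg_left (condVar_le hR hP hπ ht s a) (hoccSA s a)
    _ = (∑ s : S, ∑ a : A, occSA P π d1 t s a *
          (∑ s' : S, P t s a s' * valueV H P (rbar R) π (t+1) s' ^ 2))
        - (∑ s : S, ∑ a : A, occSA P π d1 t s a * qval H P (rbar R) π t s a ^ 2)
        + ∑ s : S, ∑ a : A, occSA P π d1 t s a * (2 * ((H : ℝ) - t) - 1) := by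
        simp only [mul_sub, mul_add, Finset.sum_add_distrib, Finset.sum_sub_distrib]
    _ ≤ (∑ s' : S, occS P π d1 (t+1) s' * valueV H P (rbar R) π (t+1) s' ^ 2)
        - (∑ s : S, occS P π d1 t s * valueV H P (rbar R) π t s ^ 2)
        + (2 * ((H : ℝ) - t) - 1) := by
        rw [occ_flow hP hπ hd1 t, hc]
        linarith [hW]
    _ = (2 * ((H : ℝ) - t) - 1)
        + (∑ s' : S, occS P π d1 (t+1) s' * valueV H P (rbar R) π (t+1) s' ^ 2)
        - ∑ s : S, occS P π d1 t s * valueV H P (rbar R) π t s ^ 2 := by ring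

end CondVarLemmas

theorem tabular_ope_CR_bound_le {S A : Type} [Fintype S] [Fintype A]
    [Nonempty S] [Nonempty A]
    (H : ℕ) (hH : 1 ≤ H)
    (P : ℕ → S → A → S → ℝ) (R : ℕ → S → A → Measure ℝ)
    (π μ : ℕ → S → A → ℝ) (d1 : S → ℝ)
    (hP : IsKernel P) (hR : IsRewardDist R) (hπ : IsPolicy π) (hμ : IsPolicy μ)
    (hd1 : IsDist d1)
    (hcov : ∀ t < H, ∀ (s : S) (a : A),
      0 < occSA P π d1 t s a → 0 < occSA P μ d1 t s a)
    (τs τa : ℝ)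
    (hτs : ∀ t < H, ∀ s : S, 0 < occS P μ d1 t s → occS P π d1 t s ≤ τs * occS P μ d1 t s)
    (hτa : ∀ t < H, ∀ (s : S) (a : A), 0 < μ t s a → π t s a ≤ τa * μ t s a) :
    ∑ t ∈ Finset.range H, ∑ s : S, ∑ a : A,
        (if 0 < occSA P μ d1 t s a then
          occSA P μ d1 t s a * (occSA P π d1 t s a / occSA P μ d1 t s a) ^ 2 *
            condVar H P R π t s a
        else 0)
      ≤ τs * τa * (H : ℝ) ^ 2 := by
  -- nonnegativity of the ratios
  obtain ⟨s0, hs0⟩ : ∃ s : S, 0 < d1 s := by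
    by_contra h
    push_neg at h
    have h1 : ∑ s : S, d1 s ≤ 0 := Finset.sum_nonpos fun s _ => h s
    rw [hd1.2] at h1; linarith
  have hτs0 : 0 ≤ τs := by
    have h := hτs 0 (by omega) s0 hs0
    have e1 : occS P π d1 0 s0 = d1 s0 := rfl
    have e2 : occS P μ d1 0 s0 = d1 s0 := rfl
    rw [e1, e2] at h
    nlinarith [hs0, h]
  have hτa0 : 0 ≤ τa := by
    obtain ⟨a0, ha0⟩ : ∃ a : A, 0 < μ 0 s0 a := by
      by_contra h
      push_neg at h
      have h1 : ∑ a : A, μ 0 s0 a ≤ 0 := Finset.sum_nonpos fun a _ => h a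
      rw [hμ.2 0 s0] at h1; linarith
    have h := hτa 0 (by omega) s0 a0 ha0
    have h2 := hπ.1 0 s0 a0
    nlinarith
  have hτsa : 0 ≤ τs * τa := mul_nonneg hτs0 hτa0
  -- pointwise bound on the summand
  have key : ∀ t, t < H → ∀ (s : S) (a : A),
      (if 0 < occSA P μ d1 t s a then
        occSA P μ d1 t s a * (occSA P π d1 t s a / occSA P μ d1 t s a) ^ 2 *
          condVar H P R π t s a
      else 0) ≤ τs * τa * (occSA P π d1 t s a * condVar H P R π t s a) := by
    intro t ht s a
    have hCV := condVar_nonneg (H := H) (π := π) hR hP t s a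
    have hπocc : 0 ≤ occSA P π d1 t s a :=
      mul_nonneg (occS_nonneg hP hπ hd1 t s) (hπ.1 t s a)
    split_ifs with hμpos
    · have hμs0 : 0 ≤ occS P μ d1 t s := occS_nonneg hP hμ hd1 t s
      have hμa0 : 0 ≤ μ t s a := hμ.1 t s a
      have hμs : 0 < occS P μ d1 t s := by
        rcases lt_or_eq_of_le hμs0 with h | h
        · exact h
        · exfalso; unfold occSA at hμpos; rw [← h] at hμpos; simp at hμpos
      have hμa : 0 < μ t s a := by
        rcases lt_or_eq_of_le hμa0 with h | h
        · exact h
        · exfalso; unfold occSA at hμpos; rw [← h] at hμpos; simp at hμpos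
      have hratio : occSA P π d1 t s a ≤ τs * τa * occSA P μ d1 t s a := by
        have h1 := hτs t ht s hμs
        have h2 := hτa t ht s a hμa
        have := mul_le_mul h1 h2 (hπ.1 t s a) (mul_nonneg hτs0 (le_of_lt hμs))
        calc occSA P π d1 t s a = occS P π d1 t s * π t s a := rfl
          _ ≤ (τs * occS P μ d1 t s) * (τa * μ t s a) := this
          _ = τs * τa * (occS P μ d1 t s * μ t s a) := by ring
          _ = τs * τa * occSA P μ d1 t s a := rfl
      have hmain : occSA P μ d1 t s a * (occSA P π d1 t s a / occSA P μ d1 t s a) ^ 2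
          ≤ τs * τa * occSA P π d1 t s a := by
        have heq : occSA P μ d1 t s a * (occSA P π d1 t s a / occSA P μ d1 t s a) ^ 2
            = occSA P π d1 t s a ^ 2 / occSA P μ d1 t s a := by
          field_simp
        rw [heq, div_le_iff₀ hμpos]
        nlinarith [hratio, hπocc]
      calc occSA P μ d1 t s a * (occSA P π d1 t s a / occSA P μ d1 t s a) ^ 2 *
            condVar H P R π t s a
          ≤ (τs * τa * occSA P π d1 t s a) * condVar H P R π t s a :=
            mul_le_mul_of_nonneg_right hmain hCV
        _ = τs * τa * (occSA P π d1 t s a * condVar H P R π t s a) := by ring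
    · exact mul_nonneg hτsa (mul_nonneg hπocc hCV)
  -- sum it all up
  calc ∑ t ∈ Finset.range H, ∑ s : S, ∑ a : A,
        (if 0 < occSA P μ d1 t s a then
          occSA P μ d1 t s a * (occSA P π d1 t s a / occSA P μ d1 t s a) ^ 2 *
            condVar H P R π t s a
        else 0)
      ≤ ∑ t ∈ Finset.range H, ∑ s : S, ∑ a : A,
          τs * τa * (occSA P π d1 t s a * condVar H P R π t s a) := by
        refine Finset.sum_le_sum fun t htr => Finset.sum_le_sum fun s _ =>
          Finset.sum_le_sum fun a _ => key t (Finset.mem_range.mp htr) s a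
    _ = τs * τa * ∑ t ∈ Finset.range H, ∑ s : S, ∑ a : A,
          occSA P π d1 t s a * condVar H P R π t s a := by
        simp_rw [← Finset.mul_sum]
    _ ≤ τs * τa * (H : ℝ) ^ 2 := by
        refine mul_le_mul_of_nonneg_left ?_ hτsa
        calc ∑ t ∈ Finset.range H, ∑ s : S, ∑ a : A,
              occSA P π d1 t s a * condVar H P R π t s a
            ≤ ∑ t ∈ Finset.range H, ((2 * ((H : ℝ) - t) - 1)
                + (∑ s' : S, occS P π d1 (t+1) s' * valueV H P (rbar R) π (t+1) s' ^ 2)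
                - ∑ s : S, occS P π d1 t s * valueV H P (rbar R) π t s ^ 2) := by
              refine Finset.sum_le_sum fun t htr => ?_
              exact step_bound hP hR hπ hd1 (Finset.mem_range.mp htr)
          _ = (∑ t ∈ Finset.range H, (2 * ((H : ℝ) - t) - 1))
              + ∑ t ∈ Finset.range H,
                  ((∑ s' : S, occS P π d1 (t+1) s' * valueV H P (rbar R) π (t+1) s' ^ 2)
                    - ∑ s : S, occS P π d1 t s * valueV H P (rbar R) π t s ^ 2) := by
              rw [← Finset.sum_add_distrib]
              exact Finset.sum_congr rfl fun t _ => by ring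
          _ = (H : ℝ) ^ 2
              + ((∑ s : S, occS P π d1 H s * valueV H P (rbar R) π H s ^ 2)
                - ∑ s : S, occS P π d1 0 s * valueV H P (rbar R) π 0 s ^ 2) := by
              rw [gauss_odd, Finset.sum_range_sub
                (fun u => ∑ s : S, occS P π d1 u s * valueV H P (rbar R) π u s ^ 2)]
          _ ≤ (H : ℝ) ^ 2 := by
              have hWH : (∑ s : S, occS P π d1 H s * valueV H P (rbar R) π H s ^ 2) = 0 := by
                refine Finset.sum_eq_zero fun s _ => ?_
                rw [valueV_of_ge (lt_irrefl H) s]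
                ring
              have hW0 : 0 ≤ ∑ s : S, occS P π d1 0 s * valueV H P (rbar R) π 0 s ^ 2 :=
                Finset.sum_nonneg fun s _ =>
                  mul_nonneg (occS_nonneg hP hπ hd1 0 s) (sq_nonneg _)
              linarith
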